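/- Define $P_n, Q_n, R_n$ by the common recursion $X_n = (1+q^n)X_{n-1} + qX_{n-2} - qX_{n-3}$ with $P_0=1, P_1=1+q, P_2=1+2q+q^2+q^3$; $Q_0=1, Q_1=1+q, Q_2=1+q+q^2+q^3$; $R_0=0, R_1=1, R_2=1+q^2$. Then for all integers $m \ge 1$, $\det\begin{pmatrix} P_{m-1} & Q_{m-1} & R_{m-1} \\ P_m & Q_m & R_m \\ P_{m+1} & Q_{m+1} & R_{m+1} \end{pmatrix} = (-1)^{m-1} q^m$. -/

import Mathlib

/-!
The determinant is the Casoratian of three solutions of the third-order recurrence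
`X (n + 3) = a n * X (n + 2) + b n * X (n + 1) + c n * X n`. Substituting the recurrence into its
last row and expanding, only the `c n * X n` term survives, and moving that row to the top is a
cyclic (even) permutation; so the Casoratian is multiplied by `c n = -q` at each step, and its
value at `0` is `q`.
-/

open Finset

section Casoratian

variable {R : Type*} [CommRing R]

def casoratian (X Y Z : ℕ → R) (n : ℕ) : R :=
  Matrix.det !![X n, Y n, Z n;
                X (n + 1), Y (n + 1), Z (n + 1);
                X (n + 2), Y (n + 2), Z (n + 2)]

variable {X Y Z a b c : ℕ → R}
  (hX : ∀ n, X (n + 3) = a n * X (n + 2) + b n * X (n + 1) + c n * X n)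
  (hY : ∀ n, Y (n + 3) = a n * Y (n + 2) + b n * Y (n + 1) + c n * Y n)
  (hZ : ∀ n, Z (n + 3) = a n * Z (n + 2) + b n * Z (n + 1) + c n * Z n)
include hX hY hZ

theorem casoratian_succ (n : ℕ) :
    casoratian X Y Z (n + 1) = c n * casoratian X Y Z n := by
  simp only [casoratian, Matrix.det_fin_three]
  simp [add_assoc, hX, hY, hZ]
  ring

theorem casoratian_eq_prod_mul (n : ℕ) :
    casoratian X Y Z n = (∏ i ∈ range n, c i) * casoratian X Y Z 0 := by
  induction n with
  | zero => simp
  | succ n ih => rw [casoratian_succ hX hY hZ, ih, prod_range_succ]; ring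

end Casoratian

theorem stmt18 {R : Type*} [CommRing R] (q : R)
    (P Q S : ℕ → R)
    (hP0 : P 0 = 1) (hP1 : P 1 = 1 + q) (hP2 : P 2 = 1 + 2 * q + q ^ 2 + q ^ 3)
    (hQ0 : Q 0 = 1) (hQ1 : Q 1 = 1 + q) (hQ2 : Q 2 = 1 + q + q ^ 2 + q ^ 3)
    (hS0 : S 0 = 0) (hS1 : S 1 = 1) (hS2 : S 2 = 1 + q ^ 2)
    (hP : ∀ n : ℕ, P (n + 3) = (1 + q ^ (n + 3)) * P (n + 2) + q * P (n + 1) - q * P n)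
    (hQ : ∀ n : ℕ, Q (n + 3) = (1 + q ^ (n + 3)) * Q (n + 2) + q * Q (n + 1) - q * Q n)
    (hS : ∀ n : ℕ, S (n + 3) = (1 + q ^ (n + 3)) * S (n + 2) + q * S (n + 1) - q * S n)
    (m : ℕ) (hm : 1 ≤ m) :
    Matrix.det !![P (m - 1), Q (m - 1), S (m - 1);
                  P m, Q m, S m;
                  P (m + 1), Q (m + 1), S (m + 1)] = (-1) ^ (m - 1) * q ^ m := by
  obtain ⟨n, rfl⟩ := Nat.exists_eq_add_of_le' hm
  have standard_form {X : ℕ → R}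
      (hX : ∀ n, X (n + 3) = (1 + q ^ (n + 3)) * X (n + 2) + q * X (n + 1) - q * X n) (n : ℕ) :
      X (n + 3) = (1 + q ^ (n + 3)) * X (n + 2) + q * X (n + 1) + -q * X n := by
    rw [hX]; ring
  have initial : casoratian P Q S 0 = q := by
    simp only [casoratian, Matrix.det_fin_three]
    simp [hP0, hP1, hP2, hQ0, hQ1, hQ2, hS0, hS1, hS2]
    ring
  have key := casoratian_eq_prod_mul (standard_form hP) (standard_form hQ) (standard_form hS) n
  rw [prod_const, card_range, initial] at key
  unfold casoratian at key
  rw [Nat.add_sub_cancel, key]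
  ring
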